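/- arXiv:1204.6643 — 4 statements merged into one kernel-verified Lean document; each statement's English description precedes it below -/
import Mathlib

section
/- Nonlinear error representation: Suppose u ∈ V solves the primal problem F(u; v) = 0 for all v ∈ V̂, let u_h ∈ V, and suppose z ∈ V̂ satisfies the averaged dual problem: ∫₀¹ D₁F(s·u + (1−s)·u_h; z)(w) ds = ∫₀¹ DM(s·u + (1−s)·u_h)(w) ds for all w in a linear subspace V₀ of V with u − u_h ∈ V₀, where D₁F(·; v) denotes the Fréchet derivative of w ↦ F(w; v) and DM the Fréchet derivative of M. Then M(u) − M(u_h) = −F(u_h; z); that is, the error in the goal functional equals the weak residual r(v) = −F(u_h; v) evaluated at the dual solution z. -/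
/-! The fundamental theorem of calculus along the segment from `u_h` to `u` writes both
`M u - M u_h` and `F u z - F u_h z` as the averaged derivatives applied to `u - u_h`; the dual
problem tested with `w = u - u_h` equates them, and `F u z = 0` by the primal problem. -/

open scoped intervalIntegral

section Segment

variable {V E : Type*} [NormedAddCommGroup V] [NormedSpace ℝ V]
  [NormedAddCommGroup E] [NormedSpace ℝ E]

theorem hasDerivAt_convexCombination (u v : V) (s : ℝ) :
    HasDerivAt (fun s : ℝ => s • u + (1 - s) • v) (u - v) s :=
  (((hasDerivAt_id s).smul_const u).add
    (((hasDerivAt_id s).const_sub 1).smul_const v)).congr_deriv (by simp [sub_eq_add_neg])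

theorem sub_eq_integral_fderiv_convexCombination [CompleteSpace E] {G : V → E}
    (hG : ContDiff ℝ 1 G) (u v : V) :
    G u - G v = ∫ s in (0 : ℝ)..1, fderiv ℝ G (s • u + (1 - s) • v) (u - v) := by
  have hderiv : ∀ s ∈ Set.uIcc (0 : ℝ) 1, HasDerivAt (fun s : ℝ => G (s • u + (1 - s) • v))
      (fderiv ℝ G (s • u + (1 - s) • v) (u - v)) s := fun s _ =>
    (hG.differentiable one_ne_zero _).hasFDerivAt.comp_hasDerivAt s
      (hasDerivAt_convexCombination u v s)
  have hcont : Continuous fun s : ℝ => fderiv ℝ G (s • u + (1 - s) • v) (u - v) :=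
    ((hG.continuous_fderiv one_ne_zero).comp (by fun_prop)).clm_apply continuous_const
  rw [intervalIntegral.integral_eq_sub_of_hasDerivAt hderiv (hcont.intervalIntegrable 0 1)]
  simp

end Segment

/-- Nonlinear error representation: let `F` be a semilinear form on `V × Vhat`
(linear in its second argument, with `w ↦ F(w; v)` continuously Fréchet
differentiable for each fixed `v`), and `M` a continuously Fréchet
differentiable goal functional.  If `u` solves the primal problem
`F(u; v) = 0` for all `v ∈ Vhat`, and `z` solves the averaged dual problem
`∫₀¹ D₁F(s•u + (1-s)•u_h; z)(w) ds = ∫₀¹ DM(s•u + (1-s)•u_h)(w) ds`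
for every `w` in a subspace `V₀` of `V` containing `u - u_h`, then
`M(u) - M(u_h) = -F(u_h; z)`. -/
theorem nonlinear_error_representation
    (V Vhat : Type*) [NormedAddCommGroup V] [NormedSpace ℝ V]
    [AddCommGroup Vhat] [Module ℝ Vhat]
    (F : V → Vhat →ₗ[ℝ] ℝ) (M : V → ℝ)
    (hF : ∀ v : Vhat, ContDiff ℝ 1 (fun w => F w v))
    (hM : ContDiff ℝ 1 M)
    (u u_h : V) (z : Vhat) (V₀ : Submodule ℝ V)
    (hprimal : ∀ v : Vhat, F u v = 0)
    (hmem : u - u_h ∈ V₀)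
    (hdual : ∀ w ∈ V₀,
      (∫ s in (0 : ℝ)..1, fderiv ℝ (fun x => F x z) (s • u + (1 - s) • u_h) w)
        = ∫ s in (0 : ℝ)..1, fderiv ℝ M (s • u + (1 - s) • u_h) w) :
    M u - M u_h = -F u_h z := by
  rw [sub_eq_integral_fderiv_convexCombination hM, ← hdual _ hmem,
    ← sub_eq_integral_fderiv_convexCombination (hF z), hprimal z, zero_sub]
end

section
/- Bubble-weighted L²-norm equivalence with constants independent of the simplex (Lemma 3.1): For every dimension d ≥ 1 and every degree p ∈ ℕ there exist constants c > 0 and C > 0, independent of the simplex, such that for every nondegenerate d-simplex T ⊂ ℝ^d with bubble function b_T and every polynomial function φ : ℝ^d → ℝ of total degree at most p, c · ∫_T φ(x)² dx ≤ ∫_T b_T(x) φ(x)² dx ≤ C · ∫_T φ(x)² dx, where integration is with respect to d-dimensional Lebesgue measure. -/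
/-!
Both integrals transform by the same factor `|det|` under the affine bijection of `ℝ^d` that
maps a fixed reference simplex onto `T`; this bijection preserves the total degree of
polynomials and pulls `b_T` back to the reference bubble. So it suffices to work on the
reference simplex, where `0 ≤ b ≤ 1` gives the upper bound with `C = 1`. For the lower bound,
both sides are continuous functions, homogeneous of degree two, of the coefficients of `φ` in
a basis of the finite-dimensional space of polynomials of degree `≤ p`; the weighted one is
positive off zero since a nonzero polynomial cannot vanish on the interior of the simplex,
where `b > 0`. Compactness of the unit sphere then yields `c`.
-/

open MeasureTheory MvPolynomial

theorem MvPolynomial.totalDegree_bind₁_le {R σ τ : Type*} [CommSemiring R] {k : ℕ}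
    (g : σ → MvPolynomial τ R) (hg : ∀ i, (g i).totalDegree ≤ k) (φ : MvPolynomial σ R) :
    (bind₁ g φ).totalDegree ≤ k * φ.totalDegree := by
  conv_lhs => rw [φ.as_sum, map_sum]
  refine totalDegree_finsetSum_le fun m hm => ?_
  rw [bind₁_monomial]
  refine (totalDegree_mul _ _).trans ?_
  rw [totalDegree_C, zero_add]
  refine (totalDegree_finsetProd _ _).trans ?_
  calc ∑ i ∈ m.support, (g i ^ m i).totalDegree ≤ ∑ i ∈ m.support, k * m i :=
        Finset.sum_le_sum fun i _ =>
          (totalDegree_pow _ _).trans (by rw [mul_comm]; exact Nat.mul_le_mul_right _ (hg i))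
    _ = k * m.sum fun _ e => e := by rw [Finsupp.sum, Finset.mul_sum]
    _ ≤ k * φ.totalDegree := Nat.mul_le_mul_left _ (le_totalDegree hm)

theorem exists_pos_mul_le_of_sq_homogeneous {E : Type*} [NormedAddCommGroup E]
    [NormedSpace ℝ E] [FiniteDimensional ℝ E] {f g : E → ℝ} (hf : Continuous f)
    (hg : Continuous g) (hf_smul : ∀ (t : ℝ) x, f (t • x) = t ^ 2 * f x)
    (hg_smul : ∀ (t : ℝ) x, g (t • x) = t ^ 2 * g x) (hf_pos : ∀ x ≠ 0, 0 < f x) :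
    ∃ c > 0, ∀ x, c * g x ≤ f x := by
  have hK : IsCompact (Metric.sphere (0 : E) 1) := isCompact_sphere 0 1
  obtain ⟨m, hm, hfm⟩ := hK.exists_forall_le' hf.continuousOn
    fun u hu => hf_pos u (ne_zero_of_mem_unit_sphere ⟨u, hu⟩)
  obtain ⟨M, hgM⟩ := hK.exists_bound_of_continuousOn hg.continuousOn
  have hM : 0 < |M| + 1 := by positivity
  refine ⟨m / (|M| + 1), div_pos hm hM, fun x => ?_⟩
  obtain rfl | hx := eq_or_ne x 0
  · have hf0 : f 0 = 0 := by simpa using hf_smul 0 0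
    have hg0 : g 0 = 0 := by simpa using hg_smul 0 0
    simp [hf0, hg0]
  have hu : ‖x‖⁻¹ • x ∈ Metric.sphere (0 : E) 1 := by
    simp [norm_smul, hx]
  have hx_eq : x = ‖x‖ • ‖x‖⁻¹ • x := by simp [smul_smul, hx]
  have hgu : m / (|M| + 1) * g (‖x‖⁻¹ • x) ≤ m := by
    rw [div_mul_eq_mul_div, div_le_iff₀ hM]
    have := (Real.norm_eq_abs _ ▸ hgM _ hu).trans (le_abs_self M)
    nlinarith [le_abs_self (g (‖x‖⁻¹ • x))]
  rw [hx_eq, hf_smul, hg_smul]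
  calc m / (|M| + 1) * (‖x‖ ^ 2 * g (‖x‖⁻¹ • x))
      = ‖x‖ ^ 2 * (m / (|M| + 1) * g (‖x‖⁻¹ • x)) := by ring
    _ ≤ ‖x‖ ^ 2 * f (‖x‖⁻¹ • x) := by gcongr; exact hgu.trans (hfm _ hu)

theorem AffineBasis.exists_affineEquiv_apply_eq {ι k V : Type*} [Ring k] [AddCommGroup V]
    [Module k V] (b b' : AffineBasis ι k V) : ∃ A : V ≃ᵃ[k] V, ∀ j, A (b j) = b' j := by
  obtain ⟨i⟩ := b.nonempty
  let L := (b.basisOf i).equiv (b'.basisOf i) (Equiv.refl _)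
  have hL (j) : L (b j - b i) = b' j - b' i := by
    obtain rfl | hj := eq_or_ne j i
    · simp
    · simpa [L] using (b.basisOf i).equiv_apply ⟨j, hj⟩ (b'.basisOf i) (Equiv.refl _)
  refine ⟨L.toAffineEquiv.trans (AffineEquiv.constVAdd k V (b' i - L (b i))), fun j => ?_⟩
  have := hL j
  simp only [AffineEquiv.trans_apply, LinearEquiv.coe_toAffineEquiv,
    AffineEquiv.constVAdd_apply, vadd_eq_add, map_sub] at this ⊢
  rw [← sub_eq_zero] at this ⊢
  rw [← this]
  abel

theorem AffineBasis.eq_coord_of_apply_eq {ι k V P : Type*} [DecidableEq ι] [Ring k]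
    [AddCommGroup V] [Module k V] [AddTorsor V P] (b : AffineBasis ι k P) {i : ι}
    {f : P →ᵃ[k] k}
    (hf : ∀ j, f (b j) = if i = j then 1 else 0) : f = b.coord i :=
  AffineMap.ext_on b.tot (by rintro _ ⟨j, rfl⟩; simp [hf, b.coord_apply])

theorem MeasureTheory.setIntegral_image_affineEquiv {E F : Type*} [NormedAddCommGroup E]
    [NormedSpace ℝ E] [FiniteDimensional ℝ E] [MeasurableSpace E] [BorelSpace E]
    [NormedAddCommGroup F] [NormedSpace ℝ F] (μ : Measure E) [μ.IsAddHaarMeasure]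
    (A : E ≃ᵃ[ℝ] E) {s : Set E} (hs : MeasurableSet s) (g : E → F) :
    ∫ y in A '' s, g y ∂μ =
      |LinearMap.det (A.linear : E →ₗ[ℝ] E)| • ∫ y in s, g (A y) ∂μ := by
  let A' : E →ᴬ[ℝ] E := ⟨A.toAffineMap, A.toAffineMap.continuous_of_finiteDimensional⟩
  have h := integral_image_eq_integral_abs_det_fderiv_smul μ hs
    (fun _ _ => A'.hasFDerivWithinAt) (f := A) A.injective.injOn g
  rwa [integral_smul] at h

theorem AffineBasis.prod_coord_mem_Icc {ι E : Type*} [Fintype ι] [AddCommGroup E] [Module ℝ E]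
    (b : AffineBasis ι ℝ E) {y : E} (hy : y ∈ convexHull ℝ (Set.range b)) :
    ∏ i, b.coord i y ∈ Set.Icc 0 1 := by
  rw [b.convexHull_eq_nonneg_coord] at hy
  refine ⟨Finset.prod_nonneg fun i _ => hy i,
    Finset.prod_le_one (fun i _ => hy i) fun i _ => ?_⟩
  calc b.coord i y ≤ ∑ j, b.coord j y :=
        Finset.single_le_sum (fun j _ => hy j) (Finset.mem_univ i)
    _ = 1 := b.sum_coord_apply_eq_one y

theorem AffineBasis.prod_coord_pos {ι E : Type*} [Fintype ι] [NormedAddCommGroup E]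
    [NormedSpace ℝ E] (b : AffineBasis ι ℝ E) {y : E}
    (hy : y ∈ interior (convexHull ℝ (Set.range b))) : 0 < ∏ i, b.coord i y := by
  rw [b.interior_convexHull] at hy
  exact Finset.prod_pos fun i _ => hy i

section PolynomialFunctions

variable {d : ℕ}

noncomputable def polyFun (P : MvPolynomial (Fin d) ℝ) (y : EuclideanSpace ℝ (Fin d)) : ℝ :=
  eval (fun i => y i) P

@[fun_prop]
theorem continuous_polyFun (P : MvPolynomial (Fin d) ℝ) : Continuous (polyFun P) :=
  (continuous_eval P).comp (PiLp.continuous_ofLp 2 _)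

theorem exists_polyFun_ne_zero_of_isOpen {P : MvPolynomial (Fin d) ℝ} (hP : P ≠ 0)
    {U : Set (EuclideanSpace ℝ (Fin d))} (hU : IsOpen U) (hne : U.Nonempty) :
    ∃ y ∈ U, polyFun P y ≠ 0 := by
  by_contra! h
  obtain ⟨y₀, hy₀⟩ := hne
  have han : AnalyticOnNhd ℝ (polyFun P) Set.univ := by
    have := AnalyticOnNhd.eval_continuousLinearMap' (𝕜 := ℝ)
      (fun i : Fin d => (EuclideanSpace.proj i : EuclideanSpace ℝ (Fin d) →L[ℝ] ℝ)) P
    exact this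
  have hzero : Set.EqOn (polyFun P) 0 Set.univ :=
    han.eqOn_zero_of_preconnected_of_eventuallyEq_zero isPreconnected_univ (Set.mem_univ y₀)
      (Filter.eventually_of_mem (hU.mem_nhds hy₀) h)
  refine hP (MvPolynomial.funext fun z => ?_)
  simpa [polyFun] using hzero (Set.mem_univ (WithLp.toLp 2 z))

theorem exists_polyFun_eq_affineMap (f : EuclideanSpace ℝ (Fin d) →ᵃ[ℝ] ℝ) :
    ∃ L : MvPolynomial (Fin d) ℝ, L.totalDegree ≤ 1 ∧ ∀ y, polyFun L y = f y := by
  refine ⟨C (f 0) + ∑ j, C (f.linear (EuclideanSpace.single j 1)) * X j, ?_, fun y => ?_⟩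
  · refine (totalDegree_add _ _).trans (max_le (by simp) (totalDegree_finsetSum_le fun j _ => ?_))
    exact (totalDegree_mul _ _).trans (by simp)
  · have hy : y = ∑ j, y j • EuclideanSpace.single j (1 : ℝ) := by
      simpa using ((EuclideanSpace.basisFun (Fin d) ℝ).sum_repr y).symm
    conv_rhs => rw [← vsub_vadd y 0, f.map_vadd, vsub_eq_sub, sub_zero, hy]
    simp [polyFun, mul_comm, add_comm]

theorem exists_polyFun_eq_comp_affineMap (P : MvPolynomial (Fin d) ℝ)
    (A : EuclideanSpace ℝ (Fin d) →ᵃ[ℝ] EuclideanSpace ℝ (Fin d)) :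
    ∃ Q : MvPolynomial (Fin d) ℝ, Q.totalDegree ≤ P.totalDegree ∧
      ∀ y, polyFun Q y = polyFun P (A y) := by
  choose L hL_deg hL using fun i =>
    exists_polyFun_eq_affineMap ((EuclideanSpace.proj i).toLinearMap.toAffineMap.comp A)
  refine ⟨bind₁ L P, (totalDegree_bind₁_le L hL_deg P).trans_eq (one_mul _), fun y => ?_⟩
  simp only [polyFun] at hL ⊢
  rw [show eval (fun i => y i) (bind₁ L P) = eval (fun i => eval (fun j => y j) (L i)) P from
    eval₂Hom_bind₁ _ _ _ _]
  simp [hL]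

theorem setIntegral_mul_polyFun_sq_pos {S : Set (EuclideanSpace ℝ (Fin d))} (hS : IsCompact S)
    (hS_int : (interior S).Nonempty) {w : EuclideanSpace ℝ (Fin d) → ℝ} (hw : Continuous w)
    (hw_nonneg : ∀ y ∈ S, 0 ≤ w y) (hw_pos : ∀ y ∈ interior S, 0 < w y)
    {P : MvPolynomial (Fin d) ℝ} (hP : P ≠ 0) :
    0 < ∫ y in S, w y * polyFun P y ^ 2 := by
  obtain ⟨y₀, hy₀, hPy₀⟩ := exists_polyFun_ne_zero_of_isOpen hP isOpen_interior hS_int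
  have hU : IsOpen (interior S ∩ {y | polyFun P y ≠ 0}) :=
    isOpen_interior.inter (isOpen_ne_fun (continuous_polyFun P) continuous_const)
  rw [setIntegral_pos_iff_support_of_nonneg_ae (f := fun y => w y * polyFun P y ^ 2)
    (ae_restrict_of_forall_mem hS.measurableSet fun y hy =>
      mul_nonneg (hw_nonneg y hy) (sq_nonneg _))
    ((hw.mul ((continuous_polyFun P).pow 2)).continuousOn.integrableOn_compact hS)]
  refine (hU.measure_pos volume ⟨y₀, hy₀, hPy₀⟩).trans_le (measure_mono ?_)
  rintro y ⟨hyS, hPy⟩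
  exact ⟨mul_ne_zero (hw_pos y hyS).ne' (pow_ne_zero 2 hPy), interior_subset hyS⟩

theorem setIntegral_mul_polyFun_sq_le {S : Set (EuclideanSpace ℝ (Fin d))} (hS : IsCompact S)
    {w : EuclideanSpace ℝ (Fin d) → ℝ} (hw : Continuous w) (hw_le : ∀ y ∈ S, w y ≤ 1)
    (P : MvPolynomial (Fin d) ℝ) :
    ∫ y in S, w y * polyFun P y ^ 2 ≤ ∫ y in S, polyFun P y ^ 2 :=
  setIntegral_mono_on
    ((hw.mul ((continuous_polyFun P).pow 2)).continuousOn.integrableOn_compact hS)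
    (((continuous_polyFun P).pow 2).continuousOn.integrableOn_compact hS) hS.measurableSet
    fun y hy => mul_le_of_le_one_left (sq_nonneg _) (hw_le y hy)

theorem exists_pos_mul_setIntegral_polyFun_sq_le (p : ℕ) {S : Set (EuclideanSpace ℝ (Fin d))}
    (hS : IsCompact S) (hS_int : (interior S).Nonempty) {w : EuclideanSpace ℝ (Fin d) → ℝ}
    (hw : Continuous w) (hw_nonneg : ∀ y ∈ S, 0 ≤ w y)
    (hw_pos : ∀ y ∈ interior S, 0 < w y) :
    ∃ c > 0, ∀ P : MvPolynomial (Fin d) ℝ, P.totalDegree ≤ p →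
      c * ∫ y in S, polyFun P y ^ 2 ≤ ∫ y in S, w y * polyFun P y ^ 2 := by
  let b := Module.finBasis ℝ (restrictTotalDegree (Fin d) ℝ p)
  let poly (a : Fin (Module.finrank ℝ (restrictTotalDegree (Fin d) ℝ p)) → ℝ) :
      MvPolynomial (Fin d) ℝ := b.equivFun.symm a
  have hpoly_smul (t : ℝ) (a) (y) : polyFun (poly (t • a)) y = t * polyFun (poly a) y := by
    simp [poly, polyFun, Finset.mul_sum, mul_assoc]
  have hpoly_sum (a) (y) : polyFun (poly a) y = ∑ k, a k * polyFun (b k) y := by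
    simp [poly, polyFun, Module.Basis.equivFun_symm_apply]
  let F (u : EuclideanSpace ℝ (Fin d) → ℝ) a := ∫ y in S, u y * polyFun (poly a) y ^ 2
  have hF_cont {u} (hu : Continuous u) : Continuous (F u) := by
    refine continuous_parametric_integral_of_continuous ?_ hS
    simp only [Function.uncurry_def, hpoly_sum]
    fun_prop
  have hF_smul (u) (t : ℝ) (a) : F u (t • a) = t ^ 2 * F u a := by
    simp only [F, hpoly_smul, ← integral_const_mul]
    congr 1 with y
    ring
  have hF_pos (a) (ha : a ≠ 0) : 0 < F w a :=
    setIntegral_mul_polyFun_sq_pos hS hS_int hw hw_nonneg hw_pos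
      (by simpa only [poly, ne_eq, ZeroMemClass.coe_eq_zero, LinearEquiv.map_eq_zero_iff])
  obtain ⟨c, hc, hcF⟩ := exists_pos_mul_le_of_sq_homogeneous (hF_cont hw)
    (hF_cont continuous_const) (hF_smul w) (hF_smul fun _ => 1) hF_pos
  refine ⟨c, hc, fun P hP => ?_⟩
  simpa only [F, poly, LinearEquiv.symm_apply_apply, one_mul] using
    hcF (b.equivFun ⟨P, (mem_restrictTotalDegree _ _ _).2 hP⟩)

theorem AffineBasis.exists_bubble_weighted_norm_equivalence {ι : Type*} [Fintype ι]
    (b : AffineBasis ι ℝ (EuclideanSpace ℝ (Fin d))) (p : ℕ) :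
    ∃ c > 0, ∀ Q : MvPolynomial (Fin d) ℝ, Q.totalDegree ≤ p →
      c * ∫ y in convexHull ℝ (Set.range b), polyFun Q y ^ 2
          ≤ ∫ y in convexHull ℝ (Set.range b), (∏ i, b.coord i y) * polyFun Q y ^ 2 ∧
        ∫ y in convexHull ℝ (Set.range b), (∏ i, b.coord i y) * polyFun Q y ^ 2
          ≤ ∫ y in convexHull ℝ (Set.range b), polyFun Q y ^ 2 := by
  have hS : IsCompact (convexHull ℝ (Set.range b)) :=
    (Set.finite_range b).isCompact_convexHull ℝ
  have hbubble : Continuous fun y => ∏ i, b.coord i y :=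
    continuous_finsetProd _ fun i _ => (b.coord i).continuous_of_finiteDimensional
  obtain ⟨c, hc, hcS⟩ := exists_pos_mul_setIntegral_polyFun_sq_le p hS
    ⟨_, b.centroid_mem_interior_convexHull⟩ hbubble (fun y hy => (b.prod_coord_mem_Icc hy).1)
    fun y hy => b.prod_coord_pos hy
  exact ⟨c, hc, fun Q hQ => ⟨hcS Q hQ,
    setIntegral_mul_polyFun_sq_le hS hbubble (fun y hy => (b.prod_coord_mem_Icc hy).2) Q⟩⟩

end PolynomialFunctions

theorem bubble_weighted_norm_equivalence_general
    (d : ℕ) (p : ℕ) :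
    ∃ c C : ℝ, 0 < c ∧ 0 < C ∧
      ∀ (x : Fin (d + 1) → EuclideanSpace ℝ (Fin d)),
        AffineIndependent ℝ x →
        ∀ (lam : Fin (d + 1) → (EuclideanSpace ℝ (Fin d) →ᵃ[ℝ] ℝ)),
          (∀ i j, lam i (x j) = if i = j then 1 else 0) →
          ∀ (P : MvPolynomial (Fin d) ℝ), P.totalDegree ≤ p →
            c * (∫ y in convexHull ℝ (Set.range x),
                  (MvPolynomial.eval (fun i => y i) P) ^ 2)
              ≤ (∫ y in convexHull ℝ (Set.range x),
                  (∏ i, lam i y) * (MvPolynomial.eval (fun i => y i) P) ^ 2) ∧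
            (∫ y in convexHull ℝ (Set.range x),
                (∏ i, lam i y) * (MvPolynomial.eval (fun i => y i) P) ^ 2)
              ≤ C * (∫ y in convexHull ℝ (Set.range x),
                  (MvPolynomial.eval (fun i => y i) P) ^ 2) := by
  obtain ⟨b⟩ : Nonempty (AffineBasis (Fin (d + 1)) ℝ (EuclideanSpace ℝ (Fin d))) :=
    AffineBasis.exists_affineBasis_of_finiteDimensional (by simp)
  obtain ⟨c, hc, hcb⟩ := b.exists_bubble_weighted_norm_equivalence p
  refine ⟨c, 1, hc, one_pos, fun x hx lam hlam P hP => ?_⟩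
  obtain ⟨A, hA⟩ : ∃ A : _ ≃ᵃ[ℝ] _, ∀ j, A (b j) = x j :=
    b.exists_affineEquiv_apply_eq
      ⟨x, hx, hx.affineSpan_eq_top_iff_card_eq_finrank_add_one.2 (by simp)⟩
  obtain ⟨Q, hQ_deg, hQ⟩ := exists_polyFun_eq_comp_affineMap P A.toAffineMap
  have hT : convexHull ℝ (Set.range x) = A '' convexHull ℝ (Set.range b) := by
    rw [← A.coe_toAffineMap, AffineMap.image_convexHull, ← Set.range_comp]
    exact congr_arg _ (congr_arg _ (funext hA)).symm
  have hbubble_comp (y) : ∏ i, lam i (A y) = ∏ i, b.coord i y := by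
    refine Finset.prod_congr rfl fun i _ => ?_
    rw [← b.eq_coord_of_apply_eq (f := (lam i).comp A.toAffineMap) fun j => by simp [hA, hlam]]
    rfl
  simp only [polyFun, AffineEquiv.coe_toAffineMap] at hQ
  rw [hT]
  simp only [setIntegral_image_affineEquiv volume A
    ((Set.finite_range b).isCompact_convexHull ℝ).measurableSet, smul_eq_mul, ← hQ,
    hbubble_comp, one_mul]
  obtain ⟨hlower, hupper⟩ := hcb Q (hQ_deg.trans hP)
  constructor
  · rw [mul_left_comm]
    exact mul_le_mul_of_nonneg_left hlower (abs_nonneg _)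
  · exact mul_le_mul_of_nonneg_left hupper (abs_nonneg _)

/-- Bubble-weighted `L²`-norm equivalence with constants independent of the
simplex (Lemma 3.1): for every dimension `d ≥ 1` and degree `p` there exist
constants `c, C > 0`, independent of the simplex, such that for every
nondegenerate `d`-simplex `T ⊂ ℝ^d` with bubble function `b_T` and every
polynomial function `φ` of total degree at most `p`,
`c ∫_T φ² dx ≤ ∫_T b_T φ² dx ≤ C ∫_T φ² dx`. -/
theorem bubble_weighted_norm_equivalence
    (d : ℕ) (hd : 1 ≤ d) (p : ℕ) :
    ∃ c C : ℝ, 0 < c ∧ 0 < C ∧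
      ∀ (x : Fin (d + 1) → EuclideanSpace ℝ (Fin d)),
        AffineIndependent ℝ x →
        ∀ (lam : Fin (d + 1) → (EuclideanSpace ℝ (Fin d) →ᵃ[ℝ] ℝ)),
          (∀ i j, lam i (x j) = if i = j then 1 else 0) →
          ∀ (P : MvPolynomial (Fin d) ℝ), P.totalDegree ≤ p →
            c * (∫ y in convexHull ℝ (Set.range x),
                  (MvPolynomial.eval (fun i => y i) P) ^ 2)
              ≤ (∫ y in convexHull ℝ (Set.range x),
                  (∏ i, lam i y) * (MvPolynomial.eval (fun i => y i) P) ^ 2) ∧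
            (∫ y in convexHull ℝ (Set.range x),
                (∏ i, lam i y) * (MvPolynomial.eval (fun i => y i) P) ^ 2)
              ≤ C * (∫ y in convexHull ℝ (Set.range x),
                  (MvPolynomial.eval (fun i => y i) P) ^ 2) :=
  bubble_weighted_norm_equivalence_general d p
end

section
/- Cell residual part of the solvability theorem (Theorem on unique determination of the cell residual): Let d ≥ 1, let T ⊂ ℝ^d be a nondegenerate d-simplex with bubble function b_T, let σ denote the (d−1)-dimensional Hausdorff measure restricted to the topological boundary ∂T, and let p ∈ ℕ. Let R be a polynomial function of total degree at most p, and let ρ : ℝ^d → ℝ be σ-integrable on ∂T. If R' is a polynomial function of total degree at most p satisfying the local cell problem ∫_T R'(x) b_T(x) φ(x) dx = ∫_T R(x) b_T(x) φ(x) dx + ∫_{∂T} ρ b_T φ dσ for every polynomial function φ of total degree at most p, then R' = R identically. (In particular, since b_T vanishes on ∂T, the boundary term is zero, and the cell residual R in any local decomposition r_T(v) = ⟨R, v⟩_T + ⟨ρ, v⟩_{∂T} is uniquely determined by testing against b_T φ.) -/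
/-!
Test the cell problem with `φ = R' - R`. The bubble `b_T` vanishes on `∂T`, so the boundary term
drops out and `∫_T (R' - R)² b_T = 0`. The open set where all barycentric coordinates are positive
is nonempty, lies in `T`, and `b_T > 0` there; hence the polynomial `R' - R` vanishes on a
nonempty open set and, being analytic, everywhere.
-/

open MeasureTheory Set

attribute [local fun_prop] AffineMap.continuous_of_finiteDimensional

theorem eqOn_zero_of_setIntegral_eq_zero_of_nonneg {X : Type*} [TopologicalSpace X] [MeasurableSpace X]
    {μ : Measure X} [μ.IsOpenPosMeasure] {g : X → ℝ} {K U : Set X} (hK : MeasurableSet K)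
    (hgK : IntegrableOn g K μ) (hg : ∀ y ∈ K, 0 ≤ g y) (hzero : ∫ y in K, g y ∂μ = 0)
    (hU : IsOpen U) (hUK : U ⊆ K) (hgU : ContinuousOn g U) : EqOn g 0 U := by
  have hae : g =ᵐ[μ.restrict K] 0 :=
    (setIntegral_eq_zero_iff_of_nonneg_ae ((ae_restrict_iff' hK).2 (.of_forall hg)) hgK).1 hzero
  exact μ.eqOn_open_of_ae_eq (ae_restrict_of_ae_restrict_of_subset hUK hae) hU hgU
    continuousOn_const

section Barycentric

variable {E ι : Type*} [NormedAddCommGroup E] [NormedSpace ℝ E]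
  {x : ι → E} {lam : ι → E →ᵃ[ℝ] ℝ}

theorem isOpen_setOf_barycentric_pos [Finite ι] [FiniteDimensional ℝ E] :
    IsOpen {y | ∀ i, 0 < lam i y} := by
  simp only [ofPred_forall]
  exact isOpen_iInter_of_finite fun i =>
    isOpen_lt continuous_const (lam i).continuous_of_finiteDimensional

variable [DecidableEq ι]

theorem barycentric_nonneg_of_mem_convexHull (hlam : ∀ i j, lam i (x j) = if i = j then 1 else 0)
    (i : ι) {y : E} (hy : y ∈ convexHull ℝ (range x)) : 0 ≤ lam i y := by
  refine convexHull_min ?_ ((convex_Ici 0).affine_preimage (lam i)) hy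
  rintro _ ⟨j, rfl⟩
  simp only [mem_preimage, mem_Ici, hlam i j]
  split_ifs <;> norm_num

variable [Fintype ι]

theorem barycentric_apply_affineCombination (hlam : ∀ i j, lam i (x j) = if i = j then 1 else 0)
    {w : ι → ℝ} (hw : ∑ i, w i = 1) (j : ι) :
    lam j (Finset.univ.affineCombination ℝ x w) = w j := by
  rw [Finset.map_affineCombination _ x w hw (lam j),
    Finset.univ.affineCombination_eq_linear_combination _ _ hw]
  simp [hlam, mul_ite]

theorem mem_convexHull_of_barycentric_nonneg
    (hlam : ∀ i j, lam i (x j) = if i = j then 1 else 0)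
    (hspan : affineSpan ℝ (range x) = ⊤) {y : E} (hy : ∀ i, 0 ≤ lam i y) :
    y ∈ convexHull ℝ (range x) := by
  obtain ⟨w, hw, rfl⟩ :=
    eq_affineCombination_of_mem_affineSpan_of_fintype (hspan ▸ AffineSubspace.mem_top ℝ E y)
  refine affineCombination_mem_convexHull (fun i _ => ?_) hw
  simpa only [barycentric_apply_affineCombination hlam hw] using hy i

theorem nonempty_setOf_barycentric_pos [Nonempty ι]
    (hlam : ∀ i j, lam i (x j) = if i = j then 1 else 0) :
    {y | ∀ i, 0 < lam i y}.Nonempty := by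
  have hw := Finset.univ.sum_centroidWeights_eq_one_of_nonempty ℝ (ι := ι) Finset.univ_nonempty
  refine ⟨Finset.univ.centroid ℝ x, fun i => ?_⟩
  rw [Finset.centroid, barycentric_apply_affineCombination hlam hw]
  simp [Finset.centroidWeights, Fintype.card_pos]

variable [FiniteDimensional ℝ E]

theorem setOf_barycentric_pos_subset_interior
    (hlam : ∀ i j, lam i (x j) = if i = j then 1 else 0)
    (hspan : affineSpan ℝ (range x) = ⊤) :
    {y | ∀ i, 0 < lam i y} ⊆ interior (convexHull ℝ (range x)) :=
  interior_maximal (fun _ hy => mem_convexHull_of_barycentric_nonneg hlam hspan fun i => (hy i).le)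
    isOpen_setOf_barycentric_pos

theorem prod_barycentric_eq_zero_of_mem_frontier
    (hlam : ∀ i j, lam i (x j) = if i = j then 1 else 0)
    (hspan : affineSpan ℝ (range x) = ⊤) {y : E} (hy : y ∈ frontier (convexHull ℝ (range x))) :
    ∏ i, lam i y = 0 := by
  have hyT : y ∈ convexHull ℝ (range x) :=
    ((finite_range x).isCompact_convexHull ℝ).isClosed.frontier_subset hy
  by_contra hne
  refine hy.2 (setOf_barycentric_pos_subset_interior hlam hspan fun i => ?_)
  exact (barycentric_nonneg_of_mem_convexHull hlam i hyT).lt_of_ne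
    (Ne.symm fun h => hne (Finset.prod_eq_zero (Finset.mem_univ i) h))

theorem eqOn_zero_of_setIntegral_sq_mul_prod_barycentric_eq_zero [MeasurableSpace E]
    [BorelSpace E] {μ : Measure E} [μ.IsOpenPosMeasure] [IsFiniteMeasureOnCompacts μ]
    (hlam : ∀ i j, lam i (x j) = if i = j then 1 else 0) (hspan : affineSpan ℝ (range x) = ⊤)
    {f : E → ℝ} (hf : Continuous f)
    (h : ∫ y in convexHull ℝ (range x), f y ^ 2 * ∏ i, lam i y ∂μ = 0) :
    EqOn f 0 {y | ∀ i, 0 < lam i y} := by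
  have hg : Continuous fun y => f y ^ 2 * ∏ i, lam i y := by fun_prop
  have hT := (finite_range x).isCompact_convexHull ℝ
  have hsq := eqOn_zero_of_setIntegral_eq_zero_of_nonneg hT.measurableSet
    (hg.continuousOn.integrableOn_compact hT)
    (fun y hy => mul_nonneg (sq_nonneg _)
      (Finset.prod_nonneg fun i _ => barycentric_nonneg_of_mem_convexHull hlam i hy))
    h isOpen_setOf_barycentric_pos
    ((setOf_barycentric_pos_subset_interior hlam hspan).trans interior_subset)
    hg.continuousOn
  intro y hy
  simpa [(Finset.prod_pos fun i _ => hy i).ne'] using hsq hy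

end Barycentric

namespace MvPolynomial

variable {ι : Type*} [Fintype ι]

theorem analyticOnNhd_eval_euclideanSpace (Q : MvPolynomial ι ℝ) :
    AnalyticOnNhd ℝ (fun y : EuclideanSpace ℝ ι => eval (fun i => y i) Q) univ :=
  AnalyticOnNhd.eval_linearMap (WithLp.linearEquiv 2 ℝ (ι → ℝ)).toLinearMap Q

@[fun_prop]
theorem continuous_eval_euclideanSpace (Q : MvPolynomial ι ℝ) :
    Continuous fun y : EuclideanSpace ℝ ι => eval (fun i => y i) Q :=
  continuousOn_univ.1 (analyticOnNhd_eval_euclideanSpace Q).continuousOn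

theorem eval_euclideanSpace_eq_zero_of_eqOn_zero {Q : MvPolynomial ι ℝ}
    {U : Set (EuclideanSpace ℝ ι)} (hU : IsOpen U) (hUne : U.Nonempty)
    (hQ : EqOn (fun y : EuclideanSpace ℝ ι => eval (fun i => y i) Q) 0 U)
    (y : EuclideanSpace ℝ ι) : eval (fun i => y i) Q = 0 := by
  obtain ⟨c, hc⟩ := hUne
  exact (analyticOnNhd_eval_euclideanSpace Q).eqOn_zero_of_preconnected_of_eventuallyEq_zero
    isPreconnected_univ (mem_univ c) (Filter.eventuallyEq_of_mem (hU.mem_nhds hc) hQ)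
    (mem_univ y)

end MvPolynomial

theorem cell_residual_uniquely_determined_general
    (d : ℕ) (p : ℕ)
    (x : Fin (d + 1) → EuclideanSpace ℝ (Fin d))
    (hx : AffineIndependent ℝ x)
    (lam : Fin (d + 1) → (EuclideanSpace ℝ (Fin d) →ᵃ[ℝ] ℝ))
    (hlam : ∀ i j, lam i (x j) = if i = j then 1 else 0)
    (T : Set (EuclideanSpace ℝ (Fin d))) (hT : T = convexHull ℝ (Set.range x))
    (bT : EuclideanSpace ℝ (Fin d) → ℝ) (hbT : bT = fun y => ∏ i, lam i y)
    (P : MvPolynomial (Fin d) ℝ) (hPdeg : P.totalDegree ≤ p)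
    (R : EuclideanSpace ℝ (Fin d) → ℝ)
    (hR : R = fun y => MvPolynomial.eval (fun i => y i) P)
    (ρ : EuclideanSpace ℝ (Fin d) → ℝ)
    (P' : MvPolynomial (Fin d) ℝ) (hP'deg : P'.totalDegree ≤ p)
    (R' : EuclideanSpace ℝ (Fin d) → ℝ)
    (hR' : R' = fun y => MvPolynomial.eval (fun i => y i) P')
    (hlocal : ∀ Q : MvPolynomial (Fin d) ℝ, Q.totalDegree ≤ p →
      (∫ y in T, R' y * bT y * MvPolynomial.eval (fun i => y i) Q)
        = (∫ y in T, R y * bT y * MvPolynomial.eval (fun i => y i) Q)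
          + ∫ y in frontier T,
              ρ y * bT y * MvPolynomial.eval (fun i => y i) Q ∂μH[(d : ℝ) - 1]) :
    ∀ y, R' y = R y := by
  have hspan : affineSpan ℝ (range x) = ⊤ := by
    rw [hx.affineSpan_eq_top_iff_card_eq_finrank_add_one]
    simp
  subst hT hbT hR hR'
  set f := fun y : EuclideanSpace ℝ (Fin d) => MvPolynomial.eval (fun i => y i) (P' - P)
  have hint : ∀ g : EuclideanSpace ℝ (Fin d) → ℝ, Continuous g →
      IntegrableOn g (convexHull ℝ (range x)) :=
    fun g hg => hg.continuousOn.integrableOn_compact ((finite_range x).isCompact_convexHull ℝ)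
  have hboundary : ∫ y in frontier (convexHull ℝ (range x)),
      ρ y * (∏ i, lam i y) * f y ∂μH[(d : ℝ) - 1] = 0 :=
    setIntegral_eq_zero_of_forall_eq_zero fun y hy => by
      simp [prod_barycentric_eq_zero_of_mem_frontier hlam hspan hy]
  have hcell := hlocal (P' - P) ((MvPolynomial.totalDegree_sub _ _).trans (max_le hP'deg hPdeg))
  rw [hboundary, add_zero, ← sub_eq_zero,
    ← integral_sub (hint _ (by fun_prop)) (hint _ (by fun_prop))] at hcell
  have hsq : ∫ y in convexHull ℝ (range x), f y ^ 2 * ∏ i, lam i y = 0 := by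
    rw [← hcell]
    congr 1 with y
    simp only [f, map_sub]
    ring
  intro y
  simpa [sub_eq_zero] using MvPolynomial.eval_euclideanSpace_eq_zero_of_eqOn_zero
    isOpen_setOf_barycentric_pos (nonempty_setOf_barycentric_pos hlam)
    (eqOn_zero_of_setIntegral_sq_mul_prod_barycentric_eq_zero hlam hspan (by fun_prop) hsq) y

/-- Cell residual part of the solvability theorem: let `T ⊂ ℝ^d` (`d ≥ 1`) be a
nondegenerate `d`-simplex with bubble function `b_T`, let `σ` be the
`(d-1)`-dimensional Hausdorff measure restricted to `∂T`, and let `p ∈ ℕ`.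
If `R` is a polynomial function of total degree at most `p`, `ρ` is
`σ`-integrable on `∂T`, and `R'` is a polynomial function of total degree at
most `p` satisfying the local cell problem
`∫_T R' b_T φ dx = ∫_T R b_T φ dx + ∫_{∂T} ρ b_T φ dσ` for every polynomial
function `φ` of total degree at most `p`, then `R' = R` identically. -/
theorem cell_residual_uniquely_determined
    (d : ℕ) (hd : 1 ≤ d) (p : ℕ)
    (x : Fin (d + 1) → EuclideanSpace ℝ (Fin d))
    (hx : AffineIndependent ℝ x)
    (lam : Fin (d + 1) → (EuclideanSpace ℝ (Fin d) →ᵃ[ℝ] ℝ))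
    (hlam : ∀ i j, lam i (x j) = if i = j then 1 else 0)
    (T : Set (EuclideanSpace ℝ (Fin d))) (hT : T = convexHull ℝ (Set.range x))
    (bT : EuclideanSpace ℝ (Fin d) → ℝ) (hbT : bT = fun y => ∏ i, lam i y)
    (P : MvPolynomial (Fin d) ℝ) (hPdeg : P.totalDegree ≤ p)
    (R : EuclideanSpace ℝ (Fin d) → ℝ)
    (hR : R = fun y => MvPolynomial.eval (fun i => y i) P)
    (ρ : EuclideanSpace ℝ (Fin d) → ℝ)
    (hρ : IntegrableOn ρ (frontier T) (μH[(d : ℝ) - 1]))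
    (P' : MvPolynomial (Fin d) ℝ) (hP'deg : P'.totalDegree ≤ p)
    (R' : EuclideanSpace ℝ (Fin d) → ℝ)
    (hR' : R' = fun y => MvPolynomial.eval (fun i => y i) P')
    (hlocal : ∀ Q : MvPolynomial (Fin d) ℝ, Q.totalDegree ≤ p →
      (∫ y in T, R' y * bT y * MvPolynomial.eval (fun i => y i) Q)
        = (∫ y in T, R y * bT y * MvPolynomial.eval (fun i => y i) Q)
          + ∫ y in frontier T,
              ρ y * bT y * MvPolynomial.eval (fun i => y i) Q ∂μH[(d : ℝ) - 1]) :
    ∀ y, R' y = R y :=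
  cell_residual_uniquely_determined_general d p x hx lam hlam T hT bT hbT P hPdeg R hR ρ P' hP'deg
    R' hR' hlocal
end

section
/- Facet residual part of the solvability theorem (Theorem on unique determination of the facet residuals): Let d ≥ 2, let T ⊂ ℝ^d be a nondegenerate d-simplex with vertices x_0, …, x_d, facets S_j = convexHull{x_i : i ≠ j} carrying (d−1)-dimensional Hausdorff measures σ_j, and cone functions β_k = ∏_{i≠k} λ_i. Let p, q ∈ ℕ, let R be a polynomial function of total degree at most p, and for each j let ρ_j be (the restriction to S_j of) a polynomial function of total degree at most q. Define the local residual r_T(v) = ∫_T R v dx + Σ_{j=0}^d ∫_{S_j} ρ_j v dσ_j for continuous v. Then for each k: (i) ρ_k satisfies the local facet problem ∫_{S_k} ρ_k β_k φ dσ_k = r_T(β_k φ) − ∫_T R β_k φ dx for every polynomial function φ of total degree at most q; and (ii) if ρ' is any polynomial function of total degree at most q satisfying the same equations, then ρ' = ρ_k on S_k. -/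
/-!
Part (i) holds because `β_k` vanishes on every facet `S_j` with `j ≠ k`, so only the `k`-th facet
term of `r_T(β_k φ)` survives. For (ii), testing both facet problems with `φ = ρ' - ρ_k` gives
`∫_{S_k} β_k (ρ' - ρ_k)² dσ_k = 0`. Up to an isometry, `σ_k` is Lebesgue measure on the
`(d-1)`-dimensional affine hull of `S_k`, so it charges every relatively open subset of it; as
`β_k > 0` on the relative interior of `S_k`, the continuous function `ρ' - ρ_k` vanishes there,
hence on its closure `S_k`.
-/

open MeasureTheory Metric Set Filter Topology Module

section Barycentric

variable {ι E : Type*} [DecidableEq ι] [AddCommGroup E] [Module ℝ E] {x : ι → E}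
  {lam : ι → E →ᵃ[ℝ] ℝ}

theorem lam_affineCombination [Fintype ι] (hlam : ∀ i j, lam i (x j) = if i = j then 1 else 0)
    {w : ι → ℝ} (hw : ∑ i, w i = 1) (j : ι) :
    lam j (Finset.univ.affineCombination ℝ x w) = w j := by
  rw [Finset.map_affineCombination _ _ _ hw,
    Finset.affineCombination_eq_linear_combination _ _ _ hw]
  simp [hlam]

theorem lam_nonneg_of_mem_convexHull (hlam : ∀ i j, lam i (x j) = if i = j then 1 else 0)
    {y : E} (hy : y ∈ convexHull ℝ (range x)) (i : ι) : 0 ≤ lam i y := by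
  refine convexHull_min (range_subset_iff.2 fun j => ?_)
    ((convex_Ici 0).affine_preimage (lam i)) hy
  simp only [mem_preimage, mem_Ici, hlam]
  split_ifs <;> norm_num

theorem lam_eq_zero_of_mem_convexHull_image (hlam : ∀ i j, lam i (x j) = if i = j then 1 else 0)
    {s : Set ι} {j : ι} (hj : j ∉ s) {y : E} (hy : y ∈ convexHull ℝ (x '' s)) : lam j y = 0 := by
  refine convexHull_min ?_ ((convex_singleton 0).affine_preimage (lam j)) hy
  rintro _ ⟨i, hi, rfl⟩
  simp [hlam, ne_of_mem_of_not_mem hi hj |>.symm]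

theorem mem_convexHull_image_of_lam_nonneg [Finite ι]
    (hlam : ∀ i j, lam i (x j) = if i = j then 1 else 0) {s : Set ι} {y : E}
    (hy : y ∈ affineSpan ℝ (x '' s)) (hpos : ∀ i ∈ s, 0 ≤ lam i y) :
    y ∈ convexHull ℝ (x '' s) := by
  have := Fintype.ofFinite s
  rw [image_eq_range] at hy ⊢
  obtain ⟨w, hw, rfl⟩ := eq_affineCombination_of_mem_affineSpan_of_fintype hy
  refine affineCombination_mem_convexHull (fun i _ => ?_) hw
  rw [← lam_affineCombination (x := fun i : s => x i) (lam := fun i : s => lam i)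
    (fun i j => by simp [hlam, Subtype.ext_iff]) hw]
  exact hpos i i.2

/-- For affinely independent `x`, the relative interior of the face `convexHull ℝ (x '' s)`. -/
def openFace (x : ι → E) (lam : ι → E →ᵃ[ℝ] ℝ) (s : Set ι) : Set E :=
  {y | y ∈ affineSpan ℝ (x '' s) ∧ ∀ i ∈ s, 0 < lam i y}

theorem openFace_subset_convexHull [Finite ι]
    (hlam : ∀ i j, lam i (x j) = if i = j then 1 else 0) (s : Set ι) :
    openFace x lam s ⊆ convexHull ℝ (x '' s) :=
  fun _ hy => mem_convexHull_image_of_lam_nonneg hlam hy.1 fun i hi => (hy.2 i hi).le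

end Barycentric

section Closure

variable {ι E : Type*} [DecidableEq ι] [NormedAddCommGroup E] [NormedSpace ℝ E] {x : ι → E}
  {lam : ι → E →ᵃ[ℝ] ℝ}

theorem convexHull_subset_closure_openFace [Finite ι]
    (hlam : ∀ i j, lam i (x j) = if i = j then 1 else 0) {s : Set ι} (hs : s.Nonempty) :
    convexHull ℝ (x '' s) ⊆ closure (openFace x lam s) := by
  have := Fintype.ofFinite s
  have := hs.to_subtype
  intro y hy
  have hw := Finset.sum_centroidWeights_eq_one_of_nonempty ℝ (Finset.univ : Finset s)
    Finset.univ_nonempty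
  have hlamz : ∀ i ∈ s, 0 < lam i ((Finset.univ : Finset s).centroid ℝ (fun i => x i)) :=
      fun i hi => by
    rw [Finset.centroid_def,
      lam_affineCombination (lam := fun i : s => lam i)
        (fun i j => by simp [hlam, Subtype.ext_iff]) hw ⟨i, hi⟩]
    simp only [Finset.centroidWeights_apply]
    positivity
  set z := (Finset.univ : Finset s).centroid ℝ (fun i => x i)
  have hzA : z ∈ affineSpan ℝ (x '' s) := by
    rw [image_eq_range]
    exact centroid_mem_affineSpan_of_nonempty (k := ℝ) _ Finset.univ_nonempty
  have hyA : y ∈ affineSpan ℝ (x '' s) := convexHull_subset_affineSpan _ hy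
  have hline : Continuous fun t : ℝ => AffineMap.lineMap z y t := by fun_prop
  refine mem_closure_of_tendsto (b := 𝓝[<] (1 : ℝ))
    (by simpa using (hline.tendsto 1).mono_left nhdsWithin_le_nhds) ?_
  filter_upwards [Ioo_mem_nhdsLT zero_lt_one] with t ht
  refine ⟨AffineMap.lineMap_mem t hzA hyA, fun i hi => ?_⟩
  have hyi := lam_nonneg_of_mem_convexHull hlam (convexHull_mono (image_subset_range _ _) hy) i
  rw [AffineMap.apply_lineMap, AffineMap.lineMap_apply_module, smul_eq_mul, smul_eq_mul]
  exact add_pos_of_pos_of_nonneg (mul_pos (by linarith [ht.2]) (hlamz i hi))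
    (mul_nonneg ht.1.le hyi)

end Closure

section HausdorffAffine

variable {E : Type*} [NormedAddCommGroup E] [NormedSpace ℝ E] (A : AffineSubspace ℝ E)

theorem AffineSubspace.isometry_add_const (c : E) :
    Isometry fun v : A.direction => (v : E) + c :=
  Isometry.of_dist_eq fun v w => by rw [dist_add_right, Subtype.dist_eq]

variable [MeasurableSpace E] [BorelSpace E] [FiniteDimensional ℝ A.direction]

theorem AffineSubspace.hausdorffMeasure_ball_inter_pos {c : E} (hc : c ∈ A) {ε : ℝ}
    (hε : 0 < ε) :
    0 < μH[finrank ℝ A.direction] (ball c ε ∩ A) := by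
  have hsub : (fun v : A.direction => (v : E) + c) '' ball 0 ε ⊆ ball c ε ∩ A := by
    rintro _ ⟨v, hv, rfl⟩
    exact ⟨by simpa using hv, AffineSubspace.vadd_mem_of_mem_direction v.2 hc⟩
  calc 0 < μH[finrank ℝ A.direction] (ball (0 : A.direction) ε) := measure_ball_pos _ _ hε
    _ = μH[finrank ℝ A.direction] ((fun v : A.direction => (v : E) + c) '' ball 0 ε) :=
      ((A.isometry_add_const c).hausdorffMeasure_image (Or.inl (Nat.cast_nonneg _)) _).symm
    _ ≤ _ := measure_mono hsub

theorem AffineSubspace.hausdorffMeasure_lt_top_of_isBounded {K : Set E} (hKA : K ⊆ A)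
    (hK : Bornology.IsBounded K) : μH[finrank ℝ A.direction] K < ⊤ := by
  rcases K.eq_empty_or_nonempty with rfl | ⟨c, hc⟩
  · simp
  obtain ⟨R, hR⟩ := hK.subset_closedBall c
  have hsub : K ⊆ (fun v : A.direction => (v : E) + c) '' closedBall 0 R := fun y hy =>
    ⟨⟨y - c, AffineSubspace.vsub_mem_direction (hKA hy) (hKA hc)⟩,
      by simpa [dist_eq_norm] using hR hy, by simp⟩
  calc μH[finrank ℝ A.direction] K
      ≤ μH[finrank ℝ A.direction] ((fun v : A.direction => (v : E) + c) '' closedBall 0 R) :=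
        measure_mono hsub
    _ = μH[finrank ℝ A.direction] (closedBall (0 : A.direction) R) :=
      (A.isometry_add_const c).hausdorffMeasure_image (Or.inl (Nat.cast_nonneg _)) _
    _ < ⊤ := (isCompact_closedBall _ _).measure_lt_top

end HausdorffAffine

theorem Continuous.integrableOn_of_isCompact {X : Type*} [TopologicalSpace X] [T2Space X]
    [MeasurableSpace X] [OpensMeasurableSpace X] {μ : Measure X} {K : Set X} (hK : IsCompact K)
    (hμK : μ K ≠ ⊤) {g : X → ℝ} (hg : Continuous g) : IntegrableOn g K μ := by
  obtain ⟨M, hM⟩ := hK.exists_bound_of_continuousOn hg.continuousOn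
  exact Measure.integrableOn_of_bounded hμK hg.aestronglyMeasurable
    ((ae_restrict_iff' hK.measurableSet).2 (.of_forall hM))

theorem Continuous.eq_zero_of_setIntegral_eq_zero {X : Type*} [TopologicalSpace X]
    [MeasurableSpace X] [OpensMeasurableSpace X] {μ : Measure X} {s : Set X} (hs : MeasurableSet s)
    {g : X → ℝ} (hg : Continuous g) (hg_nonneg : ∀ y ∈ s, 0 ≤ g y) (hg_int : IntegrableOn g s μ)
    (h : ∫ y in s, g y ∂μ = 0) {y : X} (hy : ∀ U, IsOpen U → y ∈ U → 0 < μ (U ∩ s)) :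
    g y = 0 := by
  by_contra hne
  have hae : g =ᵐ[μ.restrict s] 0 :=
    (setIntegral_eq_zero_iff_of_nonneg_ae (ae_restrict_of_forall_mem hs hg_nonneg) hg_int).1 h
  have hnull : μ ({z | g z ≠ 0} ∩ s) = 0 := by
    rw [← Measure.restrict_apply' hs]
    exact hae
  exact (hy _ (isOpen_ne_fun hg continuous_const) hne).ne' hnull

section Face

variable {ι E : Type*} [DecidableEq ι] [Finite ι] [NormedAddCommGroup E] [NormedSpace ℝ E]
  [FiniteDimensional ℝ E] [MeasurableSpace E] [BorelSpace E] {x : ι → E} {lam : ι → E →ᵃ[ℝ] ℝ}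

theorem hausdorffMeasure_open_inter_convexHull_pos
    (hlam : ∀ i j, lam i (x j) = if i = j then 1 else 0) {s : Set ι} {y : E}
    (hy : y ∈ openFace x lam s) {U : Set E} (hU : IsOpen U) (hyU : y ∈ U) :
    0 < μH[finrank ℝ (affineSpan ℝ (x '' s)).direction] (U ∩ convexHull ℝ (x '' s)) := by
  have hO : IsOpen (U ∩ {z | ∀ i ∈ s, 0 < lam i z}) := by
    simp only [ofPred_forall]
    exact hU.inter (s.toFinite.isOpen_biInter fun i _ =>
      isOpen_lt continuous_const (lam i).continuous_of_finiteDimensional)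
  obtain ⟨ε, hε, hball⟩ := Metric.isOpen_iff.1 hO y ⟨hyU, hy.2⟩
  refine ((affineSpan ℝ (x '' s)).hausdorffMeasure_ball_inter_pos hy.1 hε).trans_le
    (measure_mono fun z ⟨hzb, hzA⟩ => ⟨(hball hzb).1, ?_⟩)
  exact openFace_subset_convexHull hlam s ⟨hzA, (hball hzb).2⟩

theorem eq_zero_on_convexHull_of_setIntegral_mul_self_eq_zero
    (hlam : ∀ i j, lam i (x j) = if i = j then 1 else 0) {s : Set ι} (hs : s.Nonempty)
    {f w : E → ℝ} (hf : Continuous f) (hw : Continuous w)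
    (hw_nonneg : ∀ y ∈ convexHull ℝ (x '' s), 0 ≤ w y) (hw_pos : ∀ y ∈ openFace x lam s, 0 < w y)
    (h : ∫ y in convexHull ℝ (x '' s), f y * w y * f y
      ∂μH[finrank ℝ (affineSpan ℝ (x '' s)).direction] = 0) :
    ∀ y ∈ convexHull ℝ (x '' s), f y = 0 := by
  have hS : IsCompact (convexHull ℝ (x '' s)) := (s.toFinite.image x).isCompact_convexHull ℝ
  have hg : Continuous fun y => f y * w y * f y := (hf.mul hw).mul hf
  have hμS := (affineSpan ℝ (x '' s)).hausdorffMeasure_lt_top_of_isBounded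
    (convexHull_subset_affineSpan _) hS.isBounded
  have h_open : ∀ y ∈ openFace x lam s, f y = 0 := fun y hy => by
    have := hg.eq_zero_of_setIntegral_eq_zero hS.measurableSet
      (fun z hz => by nlinarith [mul_nonneg (hw_nonneg z hz) (mul_self_nonneg (f z))])
      (hg.integrableOn_of_isCompact hS hμS.ne) h
      (fun U hU hyU => hausdorffMeasure_open_inter_convexHull_pos hlam hy hU hyU)
    simpa [(hw_pos y hy).ne'] using this
  exact fun y hy => closure_minimal h_open (isClosed_eq hf continuous_const)
    (convexHull_subset_closure_openFace hlam hs hy)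

end Face

section Facet

variable {ι E : Type*} [Fintype ι] [DecidableEq ι] {x : ι → E}

theorem AffineIndependent.finrank_direction_affineSpan_facet [AddCommGroup E] [Module ℝ E]
    (hx : AffineIndependent ℝ x) {d : ℕ} (hcard : Fintype.card ι = d + 1) (hd : 1 ≤ d) (k : ι) :
    (finrank ℝ (affineSpan ℝ (x '' {i | i ≠ k})).direction : ℝ) = d - 1 := by
  have hx' : AffineIndependent ℝ fun i : {i | i ≠ k} => x i :=
    hx.comp_embedding (Function.Embedding.subtype _)
  rw [direction_affineSpan, image_eq_range,
    hx'.finrank_vectorSpan (n := d - 1) (by simp [Finset.filter_ne', hcard]; omega)]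
  push_cast [hd]
  ring

theorem prod_lam_eq_zero_of_mem_facet [AddCommGroup E] [Module ℝ E] {lam : ι → E →ᵃ[ℝ] ℝ}
    (hlam : ∀ i j, lam i (x j) = if i = j then 1 else 0) {j k : ι} (hjk : j ≠ k) {y : E}
    (hy : y ∈ convexHull ℝ (x '' {i | i ≠ j})) : ∏ i ∈ Finset.univ.erase k, lam i y = 0 :=
  Finset.prod_eq_zero (Finset.mem_erase.2 ⟨hjk, Finset.mem_univ j⟩)
    (lam_eq_zero_of_mem_convexHull_image hlam (by simp) hy)

variable [NormedAddCommGroup E] [NormedSpace ℝ E] [MeasurableSpace E] [BorelSpace E] {d : ℕ}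

theorem integrableOn_facet (hx : AffineIndependent ℝ x) (hcard : Fintype.card ι = d + 1)
    (hd : 1 ≤ d) (k : ι) {g : E → ℝ} (hg : Continuous g) :
    IntegrableOn g (convexHull ℝ (x '' {i | i ≠ k})) μH[(d : ℝ) - 1] := by
  have hS : IsCompact (convexHull ℝ (x '' {i | i ≠ k})) :=
    ((toFinite _).image x).isCompact_convexHull ℝ
  refine hg.integrableOn_of_isCompact hS (ne_of_lt ?_)
  rw [← hx.finrank_direction_affineSpan_facet hcard hd k]
  exact (affineSpan ℝ _).hausdorffMeasure_lt_top_of_isBounded (convexHull_subset_affineSpan _)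
    hS.isBounded

variable [FiniteDimensional ℝ E]

theorem eq_on_facet_of_setIntegral_mul_cone_eq (hx : AffineIndependent ℝ x)
    {lam : ι → E →ᵃ[ℝ] ℝ} (hlam : ∀ i j, lam i (x j) = if i = j then 1 else 0)
    (hcard : Fintype.card ι = d + 1) (hd : 1 ≤ d) (k : ι) {a b : E → ℝ} (ha : Continuous a)
    (hb : Continuous b)
    (h : ∫ y in convexHull ℝ (x '' {i | i ≠ k}),
          a y * (∏ i ∈ Finset.univ.erase k, lam i y) * (a y - b y) ∂μH[(d : ℝ) - 1]
        = ∫ y in convexHull ℝ (x '' {i | i ≠ k}),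
          b y * (∏ i ∈ Finset.univ.erase k, lam i y) * (a y - b y) ∂μH[(d : ℝ) - 1]) :
    ∀ y ∈ convexHull ℝ (x '' {i | i ≠ k}), a y = b y := by
  have hcone : Continuous fun y => ∏ i ∈ Finset.univ.erase k, lam i y :=
    continuous_finsetProd _ fun i _ => (lam i).continuous_of_finiteDimensional
  have h_orth : ∫ y in convexHull ℝ (x '' {i | i ≠ k}),
      (a y - b y) * (∏ i ∈ Finset.univ.erase k, lam i y) * (a y - b y)
        ∂μH[finrank ℝ (affineSpan ℝ (x '' {i | i ≠ k})).direction] = 0 := by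
    simp_rw [hx.finrank_direction_affineSpan_facet hcard hd k, sub_mul]
    rw [integral_sub (integrableOn_facet hx hcard hd k ?_) (integrableOn_facet hx hcard hd k ?_),
      h, sub_self]
    · exact (ha.mul hcone).mul (ha.sub hb)
    · exact (hb.mul hcone).mul (ha.sub hb)
  intro y hy
  refine sub_eq_zero.1 (eq_zero_on_convexHull_of_setIntegral_mul_self_eq_zero hlam
    (Fintype.exists_ne_of_one_lt_card (by omega) k) (ha.sub hb) hcone (fun z hz => ?_)
    (fun z hz => ?_) h_orth y hy)
  · exact Finset.prod_nonneg fun i _ =>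
      lam_nonneg_of_mem_convexHull hlam (convexHull_mono (image_subset_range _ _) hz) i
  · exact Finset.prod_pos fun i hi => hz.2 i (Finset.ne_of_mem_erase hi)

end Facet

theorem facet_residual_uniquely_determined_general
    (d : ℕ) (hd : 2 ≤ d) (q : ℕ)
    (x : Fin (d + 1) → EuclideanSpace ℝ (Fin d))
    (hx : AffineIndependent ℝ x)
    (lam : Fin (d + 1) → (EuclideanSpace ℝ (Fin d) →ᵃ[ℝ] ℝ))
    (hlam : ∀ i j, lam i (x j) = if i = j then 1 else 0)
    (T : Set (EuclideanSpace ℝ (Fin d)))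
    (S : Fin (d + 1) → Set (EuclideanSpace ℝ (Fin d)))
    (hS : ∀ j, S j = convexHull ℝ (x '' {i | i ≠ j}))
    (β : Fin (d + 1) → EuclideanSpace ℝ (Fin d) → ℝ)
    (hβ : ∀ k, β k = fun y => ∏ i ∈ Finset.univ.erase k, lam i y)
    (R : EuclideanSpace ℝ (Fin d) → ℝ)
    (Pρ : Fin (d + 1) → MvPolynomial (Fin d) ℝ)
    (hPρdeg : ∀ j, (Pρ j).totalDegree ≤ q)
    (ρ : Fin (d + 1) → EuclideanSpace ℝ (Fin d) → ℝ)
    (hρ : ∀ j, ρ j = fun y => MvPolynomial.eval (fun i => y i) (Pρ j))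
    (rT : (EuclideanSpace ℝ (Fin d) → ℝ) → ℝ)
    (hrT : ∀ v, rT v = (∫ y in T, R y * v y)
        + ∑ j, ∫ y in S j, ρ j y * v y ∂μH[(d : ℝ) - 1])
    (k : Fin (d + 1)) :
    (∀ Q : MvPolynomial (Fin d) ℝ, Q.totalDegree ≤ q →
      (∫ y in S k, ρ k y * β k y * MvPolynomial.eval (fun i => y i) Q
          ∂μH[(d : ℝ) - 1])
        = rT (fun y => β k y * MvPolynomial.eval (fun i => y i) Q)
          - ∫ y in T, R y * β k y * MvPolynomial.eval (fun i => y i) Q) ∧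
    (∀ P' : MvPolynomial (Fin d) ℝ, P'.totalDegree ≤ q →
      (∀ Q : MvPolynomial (Fin d) ℝ, Q.totalDegree ≤ q →
        (∫ y in S k,
            MvPolynomial.eval (fun i => y i) P' * β k y
              * MvPolynomial.eval (fun i => y i) Q ∂μH[(d : ℝ) - 1])
          = rT (fun y => β k y * MvPolynomial.eval (fun i => y i) Q)
            - ∫ y in T, R y * β k y * MvPolynomial.eval (fun i => y i) Q) →
      ∀ y ∈ S k, MvPolynomial.eval (fun i => y i) P' = ρ k y) := by
  obtain rfl : S = fun j => convexHull ℝ (x '' {i | i ≠ j}) := funext hS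
  obtain rfl : β = fun k y => ∏ i ∈ Finset.univ.erase k, lam i y := funext hβ
  obtain rfl : ρ = fun j y => MvPolynomial.eval (fun i => y i) (Pρ j) := funext hρ
  have hresidual : ∀ v : EuclideanSpace ℝ (Fin d) → ℝ,
      ∫ y in convexHull ℝ (x '' {i | i ≠ k}),
          MvPolynomial.eval (fun i => y i) (Pρ k) * (∏ i ∈ Finset.univ.erase k, lam i y) * v y
          ∂μH[(d : ℝ) - 1]
        = rT (fun y => (∏ i ∈ Finset.univ.erase k, lam i y) * v y)
          - ∫ y in T, R y * (∏ i ∈ Finset.univ.erase k, lam i y) * v y := fun v => by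
    rw [hrT, Finset.sum_eq_single k (fun j _ hj => setIntegral_eq_zero_of_forall_eq_zero
      fun y hy => by simp [prod_lam_eq_zero_of_mem_facet hlam hj hy]) (by simp)]
    simp only [mul_assoc, add_sub_cancel_left]
  refine ⟨fun Q _ => hresidual _, fun P' hP' hP'_eq y hy => ?_⟩
  have hcont (Q : MvPolynomial (Fin d) ℝ) :
      Continuous fun y : EuclideanSpace ℝ (Fin d) => MvPolynomial.eval (fun i => y i) Q :=
    (MvPolynomial.continuous_eval Q).comp (PiLp.continuous_ofLp 2 _)
  refine eq_on_facet_of_setIntegral_mul_cone_eq hx hlam (Fintype.card_fin _) (by omega) k (hcont P')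
    (hcont (Pρ k)) ?_ y hy
  have hdeg := (MvPolynomial.totalDegree_sub P' (Pρ k)).trans (max_le hP' (hPρdeg k))
  simpa only [map_sub] using (hP'_eq _ hdeg).trans (hresidual _).symm

/-- Facet residual part of the solvability theorem: let `T ⊂ ℝ^d` (`d ≥ 2`) be
a nondegenerate `d`-simplex with vertices `x_0, …, x_d`, facets
`S_j = convexHull {x_i : i ≠ j}` carrying `(d-1)`-dimensional Hausdorff
measure, and cone functions `β_k = ∏_{i ≠ k} lam i`.  Let `R` be a polynomial
function of total degree at most `p` and, for each `j`, let `ρ_j` be a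
polynomial function of total degree at most `q`.  Define the local residual
`r_T(v) = ∫_T R v dx + ∑_j ∫_{S_j} ρ_j v dσ_j`.  Then for each `k`:
(i) `ρ_k` satisfies the local facet problem
`∫_{S_k} ρ_k β_k φ dσ_k = r_T(β_k φ) − ∫_T R β_k φ dx` for every polynomial
function `φ` of total degree at most `q`; and (ii) any polynomial function
`ρ'` of total degree at most `q` satisfying the same equations agrees with
`ρ_k` on `S_k`. -/
theorem facet_residual_uniquely_determined
    (d : ℕ) (hd : 2 ≤ d) (p q : ℕ)
    (x : Fin (d + 1) → EuclideanSpace ℝ (Fin d))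
    (hx : AffineIndependent ℝ x)
    (lam : Fin (d + 1) → (EuclideanSpace ℝ (Fin d) →ᵃ[ℝ] ℝ))
    (hlam : ∀ i j, lam i (x j) = if i = j then 1 else 0)
    (T : Set (EuclideanSpace ℝ (Fin d))) (hT : T = convexHull ℝ (Set.range x))
    (S : Fin (d + 1) → Set (EuclideanSpace ℝ (Fin d)))
    (hS : ∀ j, S j = convexHull ℝ (x '' {i | i ≠ j}))
    (β : Fin (d + 1) → EuclideanSpace ℝ (Fin d) → ℝ)
    (hβ : ∀ k, β k = fun y => ∏ i ∈ Finset.univ.erase k, lam i y)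
    (P : MvPolynomial (Fin d) ℝ) (hPdeg : P.totalDegree ≤ p)
    (R : EuclideanSpace ℝ (Fin d) → ℝ)
    (hR : R = fun y => MvPolynomial.eval (fun i => y i) P)
    (Pρ : Fin (d + 1) → MvPolynomial (Fin d) ℝ)
    (hPρdeg : ∀ j, (Pρ j).totalDegree ≤ q)
    (ρ : Fin (d + 1) → EuclideanSpace ℝ (Fin d) → ℝ)
    (hρ : ∀ j, ρ j = fun y => MvPolynomial.eval (fun i => y i) (Pρ j))
    (rT : (EuclideanSpace ℝ (Fin d) → ℝ) → ℝ)
    (hrT : ∀ v, rT v = (∫ y in T, R y * v y)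
        + ∑ j, ∫ y in S j, ρ j y * v y ∂μH[(d : ℝ) - 1])
    (k : Fin (d + 1)) :
    (∀ Q : MvPolynomial (Fin d) ℝ, Q.totalDegree ≤ q →
      (∫ y in S k, ρ k y * β k y * MvPolynomial.eval (fun i => y i) Q
          ∂μH[(d : ℝ) - 1])
        = rT (fun y => β k y * MvPolynomial.eval (fun i => y i) Q)
          - ∫ y in T, R y * β k y * MvPolynomial.eval (fun i => y i) Q) ∧
    (∀ P' : MvPolynomial (Fin d) ℝ, P'.totalDegree ≤ q →
      (∀ Q : MvPolynomial (Fin d) ℝ, Q.totalDegree ≤ q →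
        (∫ y in S k,
            MvPolynomial.eval (fun i => y i) P' * β k y
              * MvPolynomial.eval (fun i => y i) Q ∂μH[(d : ℝ) - 1])
          = rT (fun y => β k y * MvPolynomial.eval (fun i => y i) Q)
            - ∫ y in T, R y * β k y * MvPolynomial.eval (fun i => y i) Q) →
      ∀ y ∈ S k, MvPolynomial.eval (fun i => y i) P' = ρ k y) :=
  facet_residual_uniquely_determined_general d hd q x hx lam hlam T S hS β hβ R Pρ hPρdeg ρ hρ rT
    hrT k
end
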